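/- Let Γ be a finite simplicial connected triangle-free graph with no separating vertices or edges, and let A be a set of vertices of Γ with ⟨A⟩ infinite satisfying (A1) and (A2). Let α be an induced cycle containing all of A, inducing the cyclic order a₁,…,aₙ on A, and let σ be any other induced cycle containing all of A. Then σ can be oriented so as to induce the same cyclic order a₁,…,aₙ on A. -/

import Mathlib

open SimpleGraph

/-- The cycle graph on `n` vertices, realised on `ZMod n`. -/
def cycleG (n : ℕ) : SimpleGraph (ZMod n) := SimpleGraph.fromRel (fun a b => a = b + 1)

variable {V : Type}

/-- `x` and `y` can be joined by a walk in `G` avoiding the set `S` of vertices. -/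
def AvoidReach (G : SimpleGraph V) (S : Set V) (x y : V) : Prop :=
  ∃ p : G.Walk x y, ∀ v ∈ p.support, v ∉ S

/-- `G` has no separating vertex: removing any vertex leaves the rest connected. -/
def NoSepVertex (G : SimpleGraph V) : Prop :=
  ∀ c x y : V, x ≠ c → y ≠ c → AvoidReach G {c} x y

/-- `G` has no separating edge: removing any single edge (keeping its endpoints)
leaves the graph connected. -/
def NoSepEdge (G : SimpleGraph V) : Prop :=
  ∀ a b : V, G.Adj a b → (G.deleteEdges {s(a, b)}).Preconnected

/-- `{a, b}` is a cut pair of `G`: deleting both vertices disconnects the graph,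
with at least two components each containing a vertex. -/
def CutPair (G : SimpleGraph V) (a b : V) : Prop :=
  a ≠ b ∧ ∃ x y : V, x ∉ ({a, b} : Set V) ∧ y ∉ ({a, b} : Set V) ∧ ¬ AvoidReach G {a, b} x y

/-- Removing the two points `a, b` disconnects the geometric realisation `|Γ|`.
This happens either if the graph minus the two vertices is disconnected, or if
`a` and `b` are adjacent and some other vertex exists (the open edge `ab` is then
a separate component of `|Γ| ∖ {a,b}`). -/
def SeparatesReal (G : SimpleGraph V) (a b : V) : Prop :=
  a ≠ b ∧ ((G.Adj a b ∧ ∃ c : V, c ≠ a ∧ c ≠ b) ∨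
    ∃ x y : V, x ∉ ({a, b} : Set V) ∧ y ∉ ({a, b} : Set V) ∧ ¬ AvoidReach G {a, b} x y)

/-- A vertex is essential if it has valence at least `3`. -/
def Essential (G : SimpleGraph V) (v : V) : Prop := 3 ≤ (G.neighborSet v).ncard

/-- `Γ ∖ {a,b}` has at least three components (witnessed by three pairwise
non-reachable vertices). -/
def ThreeComponentsOff (G : SimpleGraph V) (a b : V) : Prop :=
  ∃ x y z : V, x ∉ ({a, b} : Set V) ∧ y ∉ ({a, b} : Set V) ∧ z ∉ ({a, b} : Set V) ∧
    ¬ AvoidReach G {a, b} x y ∧ ¬ AvoidReach G {a, b} y z ∧ ¬ AvoidReach G {a, b} x z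

/-- `G` contains no induced square (embedded 4-cycle with no chords). -/
def NoInducedSquare (G : SimpleGraph V) : Prop :=
  ¬ ∃ a b c d : V, a ≠ c ∧ b ≠ d ∧ G.Adj a b ∧ G.Adj b c ∧ G.Adj c d ∧ G.Adj d a ∧
    ¬ G.Adj a c ∧ ¬ G.Adj b d

/-- `G` is isomorphic to a cycle graph of length `n ≥ 5`. -/
def IsLongCycleGraph (G : SimpleGraph V) : Prop :=
  ∃ n : ℕ, 5 ≤ n ∧ Nonempty (G ≃g cycleG n)

/-- `G` is a single edge. -/
def IsSingleEdge (G : SimpleGraph V) : Prop :=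
  ∃ a b : V, a ≠ b ∧ G.Adj a b ∧ ∀ v : V, v = a ∨ v = b

/-- A subdivided copy of `K₄` inside `G`: four distinct branch vertices `b 0, …, b 3`
and six pairwise internally disjoint paths (branches) joining them. -/
structure SubdividedK4 (G : SimpleGraph V) where
  b : Fin 4 → V
  inj : Function.Injective b
  path : ∀ i j : Fin 4, i < j → G.Walk (b i) (b j)
  isPath : ∀ i j (h : i < j), (path i j h).IsPath
  endpts : ∀ i j (h : i < j) (k : Fin 4), b k ∈ (path i j h).support → k = i ∨ k = j
  disjoint : ∀ i j (h : i < j) i' j' (h' : i' < j'), (i, j) ≠ (i', j') →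
    ∀ v : V, v ∈ (path i j h).support → v ∈ (path i' j' h').support → v ∈ Set.range b

/-- The vertex set of a subdivided `K₄`. -/
def SubdividedK4.verts {G : SimpleGraph V} (K : SubdividedK4 G) : Set V :=
  {v | ∃ i j h, v ∈ (K.path i j h).support}

/-- All elements of `A` lie on a single branch of the subdivided `K₄`. -/
def SubdividedK4.OnSingleBranch {G : SimpleGraph V} (K : SubdividedK4 G) (A : Set V) : Prop :=
  ∃ i j h, ∀ a ∈ A, a ∈ (K.path i j h).support

/-- Condition (A1): every pair of distinct vertices of `A` separates `|Γ|`. -/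
def CondA1 (G : SimpleGraph V) (A : Set V) : Prop :=
  ∀ a ∈ A, ∀ b ∈ A, a ≠ b → SeparatesReal G a b

/-- Condition (A2): any subdivided `K₄` subgraph of `G` containing at least three
vertices of `A` has all vertices of `A` on a single branch. -/
def CondA2 (G : SimpleGraph V) (A : Set V) : Prop :=
  ∀ K : SubdividedK4 G, 3 ≤ (A ∩ K.verts).ncard → K.OnSingleBranch A

/-- Condition (A3): `A` is maximal among sets satisfying (A1) and (A2). -/
def CondA3 (G : SimpleGraph V) (A : Set V) : Prop :=
  ∀ A' : Set V, A ⊆ A' → CondA1 G A' → CondA2 G A' → A' = A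

/-- The special subgroup generated by `A` is infinite, i.e. `A` contains a pair of
non-adjacent vertices. -/
def InfiniteSpecial (G : SimpleGraph V) (A : Set V) : Prop :=
  ∃ a ∈ A, ∃ b ∈ A, a ≠ b ∧ ¬ G.Adj a b

/-- Condition (B1): for every pair `C = {c₁, c₂}` of essential vertices, `B ∖ C` is
contained in a single component of `Γ ∖ C`. -/
def CondB1 (G : SimpleGraph V) (B : Set V) : Prop :=
  ∀ c₁ c₂ : V, c₁ ≠ c₂ → Essential G c₁ → Essential G c₂ →
    ∀ x ∈ B, ∀ y ∈ B, x ∉ ({c₁, c₂} : Set V) → y ∉ ({c₁, c₂} : Set V) →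
      AvoidReach G {c₁, c₂} x y

/-- Condition (B2): `B` is maximal among sets of essential vertices satisfying (B1). -/
def CondB2 (G : SimpleGraph V) (B : Set V) : Prop :=
  ∀ B' : Set V, B ⊆ B' → (∀ b ∈ B', Essential G b) → CondB1 G B' → B' = B

/-- Condition (B3): `B` has at least four elements. -/
def CondB3 (B : Set V) : Prop := 4 ≤ B.ncard

/-- A branch of `G`: a path between two essential vertices with no essential
interior vertices. -/
def IsBranch (G : SimpleGraph V) {x y : V} (p : G.Walk x y) : Prop :=
  p.IsPath ∧ Essential G x ∧ Essential G y ∧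
    ∀ v ∈ p.support, v ≠ x → v ≠ y → ¬ Essential G v

/-- An induced generalised theta subgraph `Θ(n₁,n₂,n₃)` with `n₁,n₂,n₃ ≥ 1`:
two vertices joined by three internally disjoint paths, each of length at least two,
whose union is an induced subgraph of `G`. -/
def HasInducedTheta (G : SimpleGraph V) : Prop :=
  ∃ (a b : V) (p₁ p₂ p₃ : G.Walk a b),
    a ≠ b ∧ p₁.IsPath ∧ p₂.IsPath ∧ p₃.IsPath ∧
    2 ≤ p₁.length ∧ 2 ≤ p₂.length ∧ 2 ≤ p₃.length ∧
    (∀ v, v ∈ p₁.support → v ∈ p₂.support → v = a ∨ v = b) ∧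
    (∀ v, v ∈ p₁.support → v ∈ p₃.support → v = a ∨ v = b) ∧
    (∀ v, v ∈ p₂.support → v ∈ p₃.support → v = a ∨ v = b) ∧
    (∀ u v : V, (u ∈ p₁.support ∨ u ∈ p₂.support ∨ u ∈ p₃.support) →
      (v ∈ p₁.support ∨ v ∈ p₂.support ∨ v ∈ p₃.support) → G.Adj u v →
      s(u, v) ∈ p₁.edges ∨ s(u, v) ∈ p₂.edges ∨ s(u, v) ∈ p₃.edges)

/-- `b` is the next element of `A` after `a` in the positive direction of the
cyclic order given by the induced-cycle isomorphism `e`. -/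
def NextIn {G : SimpleGraph V} {C : Set V} {n : ℕ} (e : G.induce C ≃g cycleG n)
    (A : Set V) (a b : V) (ha : a ∈ C) (hb : b ∈ C) : Prop :=
  ∃ k : ℕ, 0 < k ∧ e ⟨b, hb⟩ = e ⟨a, ha⟩ + (k : ZMod n) ∧
    ∀ j : ℕ, 0 < j → j < k → ∀ c : C, (c : V) ∈ A → e c ≠ e ⟨a, ha⟩ + (j : ZMod n)

/-- `a` and `b` are consecutive in the cyclic order induced on `A` by the
induced-cycle isomorphism `e`. -/
def ConsecutiveIn {G : SimpleGraph V} {C : Set V} {n : ℕ} (e : G.induce C ≃g cycleG n)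
    (A : Set V) (a b : V) (ha : a ∈ C) (hb : b ∈ C) : Prop :=
  NextIn e A a b ha hb ∨ NextIn e A b a hb ha

namespace St18
set_option linter.unusedSectionVars false
variable {V : Type}

/-- gap from `a` to `b` in the circular order given by `g`. -/
def dlt {n : ℕ} (g : V → ZMod n) (a b : V) : ℕ := (g b - g a).val

/-- `b` is the successor of `a` within `A` for the circular order `g`. -/
def Nxt (A : Set V) {n : ℕ} (g : V → ZMod n) (a b : V) : Prop :=
  a ∈ A ∧ b ∈ A ∧ a ≠ b ∧ ∀ z ∈ A, ¬(0 < dlt g a z ∧ dlt g a z < dlt g a b)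

/-- `s` and `t` are separated by `{a,c}` in the circular order `g`. -/
def Crs {n : ℕ} (g : V → ZMod n) (a c s t : V) : Prop :=
  (dlt g a s < dlt g a c ∧ dlt g a c < dlt g a t) ∨
  (dlt g a t < dlt g a c ∧ dlt g a c < dlt g a s)

section basic
variable {n : ℕ} [NeZero n] {g : V → ZMod n} {A : Set V}

lemma dlt_lt (a b : V) : dlt g a b < n := ZMod.val_lt _

lemma dlt_eq_zero_iff {a b : V} : dlt g a b = 0 ↔ g a = g b := by
  rw [dlt, ZMod.val_eq_zero, sub_eq_zero, eq_comm]

lemma dlt_pos (hinj : A.InjOn g) {a b : V} (ha : a ∈ A) (hb : b ∈ A) (hab : a ≠ b) :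
    0 < dlt g a b := by
  rcases Nat.eq_zero_or_pos (dlt g a b) with h | h
  · exact absurd (hinj ha hb (dlt_eq_zero_iff.mp h)) hab
  · exact h

lemma dlt_inj {a b b' : V} (h : dlt g a b = dlt g a b') : g b = g b' := by
  have := congrArg (Nat.cast : ℕ → ZMod n) h
  rw [dlt, dlt, ZMod.natCast_val, ZMod.natCast_val] at this
  simp only [ZMod.cast_id] at this
  linear_combination this

lemma dlt_add_dlt (a b : V) (h : g a ≠ g b) : dlt g a b + dlt g b a = n := by
  have h1 : g a - g b = -(g b - g a) := by ring
  have h2 : (g b - g a) ≠ 0 := sub_ne_zero.mpr (Ne.symm h)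
  rw [dlt, dlt, h1, ZMod.neg_val, if_neg h2]
  have := ZMod.val_lt (g b - g a)
  omega

lemma dlt_sub {a b z : V} (h : dlt g a b ≤ dlt g a z) :
    dlt g b z = dlt g a z - dlt g a b := by
  have h1 : g z - g b = (g z - g a) - (g b - g a) := by ring
  rw [dlt, h1, ZMod.val_sub h]
  rfl

lemma dlt_add {a b z : V} (h : dlt g a b ≤ dlt g a z) :
    dlt g a z = dlt g a b + dlt g b z := by
  rw [dlt_sub h]; omega

/-- If `dlt a b + dlt b d < n` then `dlt a d = dlt a b + dlt b d`. -/
lemma dlt_add' {a b d : V} (h : dlt g a b + dlt g b d < n) :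
    dlt g a d = dlt g a b + dlt g b d := by
  have h1 : g d - g a = (g b - g a) + (g d - g b) := by ring
  rw [dlt, h1, ZMod.val_add]; exact Nat.mod_eq_of_lt h

end basic
end St18

namespace St18
section succ
variable {n m : ℕ} [NeZero n] [NeZero m] {g : V → ZMod n} {h : V → ZMod m} {A : Set V}

lemma Nxt.dlt_lt' (hinj : A.InjOn g) {a b z : V} (hN : Nxt A g a b) (hz : z ∈ A)
    (hza : z ≠ a) (hzb : z ≠ b) : dlt g a b < dlt g a z := by
  have h1 : 0 < dlt g a z := dlt_pos hinj hN.1 hz (Ne.symm hza)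
  have h2 := hN.2.2.2 z hz
  have h3 : dlt g a z ≠ dlt g a b := by
    intro hh
    exact hzb (hinj hz hN.2.1 (dlt_inj hh))
  omega

lemma exists_nxt [Fintype V] (hinj : A.InjOn g) {a b₀ : V} (ha : a ∈ A) (hb₀ : b₀ ∈ A)
    (hab : a ≠ b₀) : ∃ b, Nxt A g a b := by
  classical
  have hfin : (A \ {a}).Finite := Set.toFinite _
  have hne : (hfin.toFinset).Nonempty := by
    refine ⟨b₀, ?_⟩
    rw [Set.Finite.mem_toFinset]
    exact ⟨hb₀, fun hh => hab (by simpa using hh.symm)⟩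
  obtain ⟨b, hbmem, hbmin⟩ := Finset.exists_min_image hfin.toFinset (dlt g a) hne
  rw [Set.Finite.mem_toFinset] at hbmem
  refine ⟨b, ha, hbmem.1, fun hh => hbmem.2 (by simp [hh]), fun z hz hcon => ?_⟩
  have hza : z ≠ a := fun hh => by simp [hh, dlt] at hcon
  have : dlt g a b ≤ dlt g a z := by
    refine hbmin z ?_
    rw [Set.Finite.mem_toFinset]; exact ⟨hz, by simp [hza]⟩
  omega

lemma nxt_unique (hinj : A.InjOn g) {a b b' : V} (h1 : Nxt A g a b) (h2 : Nxt A g a b') :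
    b = b' := by
  by_contra hne
  rcases lt_trichotomy (dlt g a b) (dlt g a b') with hlt | heq | hgt
  · exact h2.2.2.2 b h1.2.1 ⟨dlt_pos hinj h1.1 h1.2.1 h1.2.2.1, hlt⟩
  · exact hne (hinj h1.2.1 h2.2.1 (dlt_inj heq))
  · exact h1.2.2.2 b' h2.2.1 ⟨dlt_pos hinj h2.1 h2.2.1 h2.2.2.1, hgt⟩

lemma nxt_pred_unique (hinj : A.InjOn g) {a a' b : V} (h1 : Nxt A g a b) (h2 : Nxt A g a' b) :
    a = a' := by
  by_contra hne
  have hp : 0 < dlt g a b := dlt_pos hinj h1.1 h1.2.1 h1.2.2.1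
  have hq : dlt g a b < dlt g a a' := h1.dlt_lt' hinj h2.1 (Ne.symm hne)
      h2.2.2.1
  -- let p := dlt g a b, q := dlt g a a'.  Then dlt g b a' = q - p, dlt g a' b = n-(q-p),
  -- dlt g a' a = n - q. Nxt a' b forces dlt g a' a ≥ dlt g a' b (a ∈ A), contradiction.
  set p := dlt g a b with hp'
  set q := dlt g a a' with hq'
  have hqn : q < n := dlt_lt a a'
  have hba' : dlt g b a' = q - p := dlt_sub (le_of_lt hq)
  have hba'pos : 0 < dlt g b a' := by omega
  have hgb : g b ≠ g a' := by
    intro hh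
    rw [dlt_eq_zero_iff.mpr hh] at hba'pos; omega
  have ha'b : dlt g a' b = n - (q - p) := by
    have := dlt_add_dlt b a' hgb
    omega
  have ha'a : dlt g a' a = n - q := by
    have hga : g a ≠ g a' := by
      intro hh
      have : q = 0 := dlt_eq_zero_iff.mpr hh
      omega
    have := dlt_add_dlt a a' hga
    omega
  have hcon := h2.2.2.2 a h1.1
  have h0 : 0 < dlt g a' a := by omega
  have h1' : dlt g a' a < dlt g a' b := by omega
  exact hcon ⟨h0, h1'⟩

end succ
end St18

namespace St18
section main
variable {n m : ℕ} [NeZero n] [NeZero m] {g : V → ZMod n} {h : V → ZMod m} {A : Set V}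

lemma not_nxt_both (hinj : A.InjOn g) {a b z : V} (hz : z ∈ A) (hza : z ≠ a) (hzb : z ≠ b)
    (h1 : Nxt A g a b) (h2 : Nxt A g b a) : False := by
  have hp : 0 < dlt g a b := dlt_pos hinj h1.1 h1.2.1 h1.2.2.1
  have hr : dlt g a b < dlt g a z := h1.dlt_lt' hinj hz hza hzb
  have hrn : dlt g a z < n := dlt_lt a z
  have hbz : dlt g b z = dlt g a z - dlt g a b := dlt_sub (le_of_lt hr)
  have hba : dlt g b a = n - dlt g a b := by
    have hga : g a ≠ g b := fun hh => by
      have : dlt g a b = 0 := dlt_eq_zero_iff.mpr hh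
      omega
    have := dlt_add_dlt a b hga
    omega
  exact h2.2.2.2 z hz ⟨by omega, by omega⟩

/-- The crossing hypothesis: `g` and `h` induce the same separation relation on `A`. -/
def SameCrs (A : Set V) (g : V → ZMod n) (h : V → ZMod m) : Prop :=
  ∀ a c s t : V, a ∈ A → c ∈ A → s ∈ A → t ∈ A →
    a ≠ c → a ≠ s → a ≠ t → c ≠ s → c ≠ t → s ≠ t →
    (Crs g a c s t ↔ Crs h a c s t)

lemma sameCrs_symm (hc : SameCrs A g h) : SameCrs A h g := by
  intro a c s t ha hc' hs ht h1 h2 h3 h4 h5 h6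
  exact (hc a c s t ha hc' hs ht h1 h2 h3 h4 h5 h6).symm

lemma dichotomy (hinjg : A.InjOn g) (hinjh : A.InjOn h) (hcr : SameCrs A g h)
    {a b : V} (hN : Nxt A g a b) : Nxt A h a b ∨ Nxt A h b a := by
  by_contra hcon
  push_neg at hcon
  obtain ⟨hc1, hc2⟩ := hcon
  have ha : a ∈ A := hN.1
  have hb : b ∈ A := hN.2.1
  have hab : a ≠ b := hN.2.2.1
  -- from ¬ Nxt h a b get c, from ¬ Nxt h b a get d
  have hex1 : ∃ c ∈ A, 0 < dlt h a c ∧ dlt h a c < dlt h a b := by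
    by_contra hh; push_neg at hh
    exact hc1 ⟨ha, hb, hab, fun z hz hcon2 => by
      have := hh z hz hcon2.1; omega⟩
  have hex2 : ∃ d ∈ A, 0 < dlt h b d ∧ dlt h b d < dlt h b a := by
    by_contra hh; push_neg at hh
    exact hc2 ⟨hb, ha, hab.symm, fun z hz hcon2 => by
      have := hh z hz hcon2.1; omega⟩
  obtain ⟨c, hcA, hc0, hcb⟩ := hex1
  obtain ⟨d, hdA, hd0, hda⟩ := hex2
  have hca : c ≠ a := fun hh => by rw [hh] at hc0; simp [dlt] at hc0
  have hcb' : c ≠ b := fun hh => by rw [hh] at hcb; omega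
  have hdb : d ≠ b := fun hh => by rw [hh] at hd0; simp [dlt] at hd0
  have hda' : d ≠ a := fun hh => by rw [hh] at hda; omega
  -- dlt h a d = dlt h a b + dlt h b d
  have hhab : g a ≠ g b ∧ h a ≠ h b := ⟨fun hh => hab (hinjg ha hb hh), fun hh => hab (hinjh ha hb hh)⟩
  have hsum : dlt h a b + dlt h b a = m := dlt_add_dlt a b hhab.2
  have had : dlt h a d = dlt h a b + dlt h b d := dlt_add' (by omega)
  have hcd : c ≠ d := by
    intro hh; rw [hh] at hcb; omega
  -- Crs h a b c d holds
  have hcrs_h : Crs h a b c d := Or.inl ⟨hcb, by omega⟩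
  have hcrs_g : Crs g a b c d :=
    (hcr a b c d ha hb hcA hdA hab hca.symm hda'.symm hcb'.symm hdb.symm hcd).mpr hcrs_h
  -- but in g, both c and d are beyond b
  have hgc : dlt g a b < dlt g a c := hN.dlt_lt' hinjg hcA hca hcb'
  have hgd : dlt g a b < dlt g a d := hN.dlt_lt' hinjg hdA hda' hdb
  rcases hcrs_g with ⟨h1, h2⟩ | ⟨h1, h2⟩ <;> omega

end main
end St18

namespace St18
section main2
variable {n m : ℕ} [NeZero n] [NeZero m] {g : V → ZMod n} {h : V → ZMod m} {A : Set V}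

/-- three distinct elements of `A`. -/
def Three (A : Set V) : Prop :=
  ∃ u v w, u ∈ A ∧ v ∈ A ∧ w ∈ A ∧ u ≠ v ∧ u ≠ w ∧ v ≠ w

lemma Three.third (h3 : Three A) (a b : V) : ∃ z ∈ A, z ≠ a ∧ z ≠ b := by
  obtain ⟨u, v, w, hu, hv, hw, h1, h2, h3⟩ := h3
  by_cases hua : u = a ∨ u = b
  · by_cases hva : v = a ∨ v = b
    · refine ⟨w, hw, ?_, ?_⟩ <;> rcases hua with rfl|rfl <;> rcases hva with rfl|rfl <;> tauto
    · exact ⟨v, hv, by tauto, by tauto⟩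
  · exact ⟨u, hu, by tauto, by tauto⟩

lemma not_nxt_both' (h3 : Three A) (hinj : A.InjOn g) {a b : V}
    (h1 : Nxt A g a b) (h2 : Nxt A g b a) : False := by
  obtain ⟨z, hz, hza, hzb⟩ := h3.third a b
  exact not_nxt_both hinj hz hza hzb h1 h2

lemma propagate (h3 : Three A) (hinjg : A.InjOn g) (hinjh : A.InjOn h) (hcr : SameCrs A g h)
    {a b x y : V} (hab_g : Nxt A g a b) (hab_h : Nxt A h a b) (hxy : Nxt A g x y) :
    Nxt A h x y := by
  have ha := hab_g.1; have hb := hab_g.2.1; have hx := hxy.1; have hy := hxy.2.1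
  have hxy' : x ≠ y := hxy.2.2.1
  have hab : a ≠ b := hab_g.2.2.1
  by_cases hxa : x = a
  · have h1 : Nxt A g a y := by rwa [hxa] at hxy
    have h2 : b = y := nxt_unique hinjg hab_g h1
    rw [hxa, ← h2]; exact hab_h
  by_cases hya : y = a
  · have h1 : Nxt A g x a := by rwa [hya] at hxy
    rcases dichotomy hinjg hinjh hcr h1 with hh | hh
    · rwa [hya]
    · exfalso
      have h2 : b = x := nxt_unique hinjh hab_h hh
      rw [← h2] at h1
      exact not_nxt_both' h3 hinjg hab_g h1
  by_cases hxb : x = b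
  · have h1 : Nxt A g b y := by rwa [hxb] at hxy
    rcases dichotomy hinjg hinjh hcr h1 with hh | hh
    · rwa [hxb]
    · exfalso
      have h2 : a = y := nxt_pred_unique hinjh hab_h hh
      rw [← h2] at h1
      exact not_nxt_both' h3 hinjg hab_g h1
  by_cases hyb : y = b
  · exfalso
    have h1 : Nxt A g x b := by rwa [hyb] at hxy
    exact hxa (nxt_pred_unique hinjg hab_g h1).symm
  rcases dichotomy hinjg hinjh hcr hxy with hh | hh
  · exact hh
  exfalso
  have h1g : dlt g a b < dlt g a x := hab_g.dlt_lt' hinjg hx hxa hxb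
  have h2g : dlt g x y < dlt g x a :=
    hxy.dlt_lt' hinjg ha (fun hh2 => hxa hh2.symm) (fun hh2 => hya hh2.symm)
  have hsumg : dlt g a x + dlt g x a = n :=
    dlt_add_dlt a x (fun hh2 => hxa (hinjg ha hx hh2).symm)
  have h0g : 0 < dlt g x y := dlt_pos hinjg hx hy hxy'
  have h3g : dlt g a y = dlt g a x + dlt g x y := dlt_add' (by omega)
  have hcrs_g : Crs g a x b y := Or.inl ⟨h1g, by omega⟩
  have h1h : dlt h a b < dlt h a x := hab_h.dlt_lt' hinjh hx hxa hxb
  have h2h : dlt h y x < dlt h y a :=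
    hh.dlt_lt' hinjh ha (fun hh2 => hya hh2.symm) (fun hh2 => hxa hh2.symm)
  have hsumh : dlt h a y + dlt h y a = m :=
    dlt_add_dlt a y (fun hh2 => hya (hinjh ha hy hh2).symm)
  have h0h : 0 < dlt h y x := dlt_pos hinjh hy hx (Ne.symm hxy')
  have h0h' : 0 < dlt h a y := dlt_pos hinjh ha hy (fun hh2 => hya hh2.symm)
  have h3h : dlt h a x = dlt h a y + dlt h y x := dlt_add' (by omega)
  have hcrs_h : Crs h a x b y :=
    (hcr a x b y ha hx hb hy (fun hh2 => hxa hh2.symm) hab (fun hh2 => hya hh2.symm)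
      hxb hxy' (fun hh2 => hyb hh2.symm)).mp hcrs_g
  rcases hcrs_h with ⟨u1, u2⟩ | ⟨u1, u2⟩ <;> omega

end main2
end St18

namespace St18
section rev
variable {n m : ℕ} [NeZero n] [NeZero m] {g : V → ZMod n} {h : V → ZMod m} {A : Set V}

lemma dlt_neg (x y : V) : dlt (fun v => -(h v)) x y = dlt h y x := by
  show (-(h y) - -(h x)).val = _
  congr 1; ring

lemma dlt_congr {x y z : V} (hzy : h z = h y) : dlt h z x = dlt h y x := by
  unfold dlt; rw [hzy]

lemma arc_swap {x y z : V} (hq : 0 < dlt h y x) :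
    (0 < dlt h z x ∧ dlt h z x < dlt h y x) ↔ (0 < dlt h y z ∧ dlt h y z < dlt h y x) := by
  constructor
  · rintro ⟨h1, h2⟩
    rcases Nat.eq_zero_or_pos (dlt h y z) with h0 | h0
    · exfalso
      have := dlt_congr (x := x) (dlt_eq_zero_iff.mp h0).symm
      omega
    refine ⟨h0, ?_⟩
    by_contra hge
    push_neg at hge
    rcases eq_or_lt_of_le hge with heq | hlt
    · have : h x = h z := dlt_inj (g := h) heq
      rw [dlt_eq_zero_iff.mpr this.symm] at h1; omega
    · have hxz : dlt h x z = dlt h y z - dlt h y x := dlt_sub (le_of_lt hlt)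
      have hne : h x ≠ h z := by
        intro hh
        rw [dlt_eq_zero_iff.mpr hh.symm] at h1; omega
      have hsum : dlt h x z + dlt h z x = m := dlt_add_dlt x z hne
      have := dlt_lt (g := h) y z
      omega
  · rintro ⟨h1, h2⟩
    have hzx : dlt h z x = dlt h y x - dlt h y z := dlt_sub (le_of_lt h2)
    omega

lemma nxt_neg (hinjh : A.InjOn h) {x y : V} :
    Nxt A (fun v => -(h v)) x y ↔ Nxt A h y x := by
  constructor
  · rintro ⟨hx, hy, hxy, hcond⟩
    have hq : 0 < dlt h y x := dlt_pos hinjh hy hx (Ne.symm hxy)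
    refine ⟨hy, hx, Ne.symm hxy, fun z hz hc => ?_⟩
    refine hcond z hz ?_
    rw [dlt_neg, dlt_neg]
    exact (arc_swap hq).mpr hc
  · rintro ⟨hy, hx, hyx, hcond⟩
    have hq : 0 < dlt h y x := dlt_pos hinjh hy hx hyx
    refine ⟨hx, hy, Ne.symm hyx, fun z hz hc => ?_⟩
    rw [dlt_neg, dlt_neg] at hc
    exact hcond z hz ((arc_swap hq).mp hc)

lemma crs_neg (hinjh : A.InjOn h) {a c s t : V} (ha : a ∈ A) (hc : c ∈ A) (hs : s ∈ A)
    (ht : t ∈ A) (hac : a ≠ c) (has : a ≠ s) (hat : a ≠ t) :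
    Crs (fun v => -(h v)) a c s t ↔ Crs h a c s t := by
  have e1 : dlt h a c + dlt h c a = m := dlt_add_dlt a c (fun hh => hac (hinjh ha hc hh))
  have e2 : dlt h a s + dlt h s a = m := dlt_add_dlt a s (fun hh => has (hinjh ha hs hh))
  have e3 : dlt h a t + dlt h t a = m := dlt_add_dlt a t (fun hh => hat (hinjh ha ht hh))
  have p1 : 0 < dlt h a c := dlt_pos hinjh ha hc hac
  have p2 : 0 < dlt h a s := dlt_pos hinjh ha hs has
  have p3 : 0 < dlt h a t := dlt_pos hinjh ha ht hat
  unfold Crs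
  rw [dlt_neg, dlt_neg, dlt_neg]
  omega

lemma sameCrs_neg (hinjh : A.InjOn h) (hcr : SameCrs A g h) :
    SameCrs A g (fun v => -(h v)) := by
  intro a c s t ha hc hs ht h1 h2 h3 h4 h5 h6
  rw [hcr a c s t ha hc hs ht h1 h2 h3 h4 h5 h6, crs_neg hinjh ha hc hs ht h1 h2 h3]

lemma injOn_neg (hinjh : A.InjOn h) : A.InjOn (fun v => -(h v)) := by
  intro x hx y hy hxy
  exact hinjh hx hy (by simpa using hxy)

lemma ct_half (h3 : Three A) (hinjg : A.InjOn g) (hinjh : A.InjOn h) (hcr : SameCrs A g h)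
    {a b : V} (hg : Nxt A g a b) (hh : Nxt A h a b) :
    ∀ x y, Nxt A g x y ↔ Nxt A h x y := by
  intro x y
  constructor
  · exact propagate h3 hinjg hinjh hcr hg hh
  · intro hxy
    rcases dichotomy hinjh hinjg (sameCrs_symm hcr) hxy with hh2 | hh2
    · exact hh2
    · exfalso
      exact not_nxt_both' h3 hinjh (propagate h3 hinjg hinjh hcr hg hh hh2) hxy

lemma nxt_two (hn3 : ¬ Three A) {x y : V} :
    Nxt A g x y ↔ (x ∈ A ∧ y ∈ A ∧ x ≠ y) := by
  constructor
  · exact fun hh => ⟨hh.1, hh.2.1, hh.2.2.1⟩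
  · rintro ⟨hx, hy, hxy⟩
    refine ⟨hx, hy, hxy, fun z hz hc => ?_⟩
    have hzx : z ≠ x := fun hh => by rw [hh] at hc; simp [dlt] at hc
    have hzy : z ≠ y := fun hh => by rw [hh] at hc; omega
    exact hn3 ⟨x, y, z, hx, hy, hz, hxy, Ne.symm hzx, Ne.symm hzy⟩

theorem ct [Fintype V] (hinjg : A.InjOn g) (hinjh : A.InjOn h) (hcr : SameCrs A g h)
    (h2 : ∃ a ∈ A, ∃ b ∈ A, a ≠ b) :
    (∀ x y, Nxt A g x y ↔ Nxt A h x y) ∨ (∀ x y, Nxt A g x y ↔ Nxt A h y x) := by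
  by_cases h3 : Three A
  · obtain ⟨a, ha, b₀, hb₀, hab⟩ := h2
    obtain ⟨b, hN⟩ := exists_nxt hinjg ha hb₀ hab
    rcases dichotomy hinjg hinjh hcr hN with hd | hd
    · exact Or.inl (ct_half h3 hinjg hinjh hcr hN hd)
    · right
      intro x y
      rw [ct_half h3 hinjg (injOn_neg hinjh) (sameCrs_neg hinjh hcr) hN
        ((nxt_neg hinjh).mpr hd) x y, nxt_neg hinjh]
  · left
    intro x y
    rw [nxt_two (g := g) h3, nxt_two (g := h) h3]

end rev
end St18

namespace St18
open SimpleGraph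
variable {V : Type}

open Classical in
/-- position function of an induced cycle iso. -/
noncomputable def pos {G : SimpleGraph V} (C : Set V) {n : ℕ} [NeZero n]
    (e : G.induce C ≃g cycleG n) : V → ZMod n :=
  fun v => if hv : v ∈ C then e ⟨v, hv⟩ else 0

lemma pos_mem {G : SimpleGraph V} {C : Set V} {n : ℕ} [NeZero n]
    (e : G.induce C ≃g cycleG n) {v : V} (hv : v ∈ C) : pos C e v = e ⟨v, hv⟩ := by
  unfold pos
  rw [dif_pos hv]

lemma pos_injOn {G : SimpleGraph V} {C : Set V} {n : ℕ} [NeZero n]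
    (e : G.induce C ≃g cycleG n) {A : Set V} (hAC : A ⊆ C) : A.InjOn (pos C e) := by
  intro x hx y hy hxy
  rw [pos_mem e (hAC hx), pos_mem e (hAC hy)] at hxy
  have := e.injective hxy
  exact congrArg Subtype.val this

lemma natCast_dlt {n : ℕ} [NeZero n] (g : V → ZMod n) (a b : V) :
    ((dlt g a b : ℕ) : ZMod n) = g b - g a := by
  rw [dlt, ZMod.natCast_val, ZMod.cast_id]

lemma nextIn_iff_nxt {G : SimpleGraph V} {C : Set V} {n : ℕ} (hn : 3 ≤ n)
    {A : Set V} (hAC : A ⊆ C)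
    (hA2 : ∃ a' ∈ A, ∃ b' ∈ A, a' ≠ b')
    (e : G.induce C ≃g cycleG n) {a b : V} (ha : a ∈ A) (hb : b ∈ A) :
    haveI : NeZero n := ⟨by omega⟩
    NextIn e A a b (hAC ha) (hAC hb) ↔ Nxt A (pos C e) a b := by
  haveI : NeZero n := ⟨by omega⟩
  set g := pos C e with hg
  have hposa : g a = e ⟨a, hAC ha⟩ := pos_mem e (hAC ha)
  have hposb : g b = e ⟨b, hAC hb⟩ := pos_mem e (hAC hb)
  have hinj : A.InjOn g := pos_injOn e hAC
  constructor
  · rintro ⟨k, hk0, hkeq, hmin⟩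
    -- first : a ≠ b
    have hcast : (k : ZMod n) = g b - g a := by
      rw [hposa, hposb, hkeq]; ring
    have hab : a ≠ b := by
      rintro rfl
      have hk00 : (k : ZMod n) = 0 := by rw [hcast]; ring
      have hdvd : n ∣ k := (ZMod.natCast_eq_zero_iff k n).mp hk00
      have hkn : n ≤ k := Nat.le_of_dvd hk0 hdvd
      obtain ⟨a', ha', b', hb', hab'⟩ := hA2
      -- take z ∈ A with z ≠ a
      have : ∃ z ∈ A, z ≠ a := by
        by_cases h : a' = a
        · exact ⟨b', hb', by rw [← h]; exact hab'.symm⟩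
        · exact ⟨a', ha', h⟩
      obtain ⟨z, hz, hza⟩ := this
      have hj : 0 < dlt g a z := dlt_pos hinj ha hz (Ne.symm hza)
      have hjn : dlt g a z < n := dlt_lt a z
      refine hmin (dlt g a z) hj (by omega) ⟨z, hAC hz⟩ hz ?_
      rw [← pos_mem e (hAC hz), ← hposa, ← hg, natCast_dlt]
      ring
    have hK0 : 0 < dlt g a b := dlt_pos hinj ha hb hab
    have hKn : dlt g a b < n := dlt_lt a b
    have hkK : (k : ZMod n) = ((dlt g a b : ℕ) : ZMod n) := by
      rw [natCast_dlt]; exact hcast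
    by_cases hkn : k < n
    · have hkeqK : k = dlt g a b := by
        have := (ZMod.natCast_eq_natCast_iff' k (dlt g a b) n).mp hkK
        rwa [Nat.mod_eq_of_lt hkn, Nat.mod_eq_of_lt hKn] at this
      refine ⟨ha, hb, hab, fun z hz hcon => ?_⟩
      refine hmin (dlt g a z) hcon.1 (by omega) ⟨z, hAC hz⟩ hz ?_
      rw [← pos_mem e (hAC hz), ← hposa, ← hg, natCast_dlt]
      ring
    · exfalso
      push_neg at hkn
      refine hmin (dlt g a b) hK0 (by omega) ⟨b, hAC hb⟩ hb ?_
      rw [← pos_mem e (hAC hb), ← hposa, ← hg, natCast_dlt]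
      ring
  · rintro ⟨_, _, hab, hcond⟩
    have hK0 : 0 < dlt g a b := dlt_pos hinj ha hb hab
    have hKn : dlt g a b < n := dlt_lt a b
    refine ⟨dlt g a b, hK0, ?_, ?_⟩
    · rw [← hposa, ← hposb, natCast_dlt]
      ring
    · intro j hj0 hjK c hcA hcon
      have hc : (c : V) ∈ C := c.2
      have hjn : j < n := by omega
      have : dlt g a (c : V) = j := by
        have hgc : g (c : V) = g a + (j : ZMod n) := by
          rw [hg, pos_mem e hc, pos_mem e (hAC ha)]
          rw [show (⟨(c : V), hc⟩ : C) = c from Subtype.ext rfl]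
          exact hcon
        rw [dlt, hgc]
        have : g a + (j : ZMod n) - g a = (j : ZMod n) := by ring
        rw [this, ZMod.val_cast_of_lt hjn]
      exact hcond (c : V) hcA ⟨by omega, by omega⟩

end St18

namespace St18
open SimpleGraph
variable {V : Type}

lemma cycleG_adj {n : ℕ} {x y : ZMod n} :
    (cycleG n).Adj x y ↔ x ≠ y ∧ (x = y + 1 ∨ y = x + 1) := by
  unfold cycleG
  rw [SimpleGraph.fromRel_adj]

lemma cycleG_adj_succ {n : ℕ} (hn : 3 ≤ n) (x : ZMod n) : (cycleG n).Adj x (x + 1) := by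
  haveI : NeZero n := ⟨by omega⟩
  rw [cycleG_adj]
  refine ⟨?_, Or.inr rfl⟩
  intro h
  have h1 : (1 : ZMod n) = 0 := by linear_combination -h
  have := ZMod.val_cast_of_lt (show 1 < n by omega)
  rw [Nat.cast_one, h1] at this
  simp at this

/-- The walk `x, x+1, …, x+k` in the cycle graph. -/
def arcWalk (n : ℕ) (hn : 3 ≤ n) (x : ZMod n) : (k : ℕ) → (cycleG n).Walk x (x + k)
  | 0 => Walk.nil.copy rfl (by simp)
  | (k+1) => ((arcWalk n hn x k).concat (cycleG_adj_succ hn _)).copy rfl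
      (by push_cast; ring)

lemma arcWalk_support (n : ℕ) (hn : 3 ≤ n) (x : ZMod n) (k : ℕ) :
    (arcWalk n hn x k).support = (List.range (k+1)).map (fun i => x + (i : ℕ)) := by
  induction k with
  | zero => simp [arcWalk, List.range_succ]
  | succ k ih =>
    have h1 : (List.range (k+1+1)) = List.range (k+1) ++ [k+1] := List.range_succ
    rw [arcWalk, Walk.support_copy, Walk.support_concat, ih, h1,
      List.map_append]
    congr 1
    simp only [List.map_singleton]
    congr 1
    push_cast
    ring

lemma mem_arcWalk_support (n : ℕ) (hn : 3 ≤ n) (x : ZMod n) (k : ℕ) (v : ZMod n) :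
    v ∈ (arcWalk n hn x k).support ↔ ∃ i : ℕ, i ≤ k ∧ v = x + (i : ℕ) := by
  rw [arcWalk_support, List.mem_map]
  constructor
  · rintro ⟨i, hi, rfl⟩
    exact ⟨i, by simpa using Nat.lt_succ_iff.mp (List.mem_range.mp hi), rfl⟩
  · rintro ⟨i, hi, rfl⟩
    exact ⟨i, List.mem_range.mpr (Nat.lt_succ_iff.mpr hi), rfl⟩

lemma natCast_inj_of_lt {n i j : ℕ} (hi : i < n) (hj : j < n) (h : (i : ZMod n) = j) :
    i = j := by
  haveI : NeZero n := ⟨by omega⟩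
  have := congrArg ZMod.val h
  rwa [ZMod.val_cast_of_lt hi, ZMod.val_cast_of_lt hj] at this

lemma arcWalk_isPath (n : ℕ) (hn : 3 ≤ n) (x : ZMod n) (k : ℕ) (hk : k < n) :
    (arcWalk n hn x k).IsPath := by
  rw [Walk.isPath_def, arcWalk_support]
  refine List.Nodup.map_on ?_ List.nodup_range
  intro i hi j hj hij
  have hi' : i < n := lt_of_lt_of_le (List.mem_range.mp hi) (by omega)
  have hj' : j < n := lt_of_lt_of_le (List.mem_range.mp hj) (by omega)
  exact natCast_inj_of_lt hi' hj' (by linear_combination hij)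

section transport
variable {G : SimpleGraph V} {C : Set V} {n : ℕ}

/-- the vertex of `G` sitting at position `z` of the induced cycle. -/
def cvx (e : G.induce C ≃g cycleG n) (z : ZMod n) : V := (e.symm z : V)

lemma cvx_injective (e : G.induce C ≃g cycleG n) : Function.Injective (cvx e) := by
  intro z w h
  exact e.symm.injective (Subtype.ext h)

/-- the graph homomorphism from the cycle graph to `G`. -/
def chom (e : G.induce C ≃g cycleG n) : cycleG n →g G :=
  (SimpleGraph.Embedding.induce C).toHom.comp e.symm.toHom

lemma chom_apply (e : G.induce C ≃g cycleG n) (z : ZMod n) : chom e z = cvx e z := rfl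

lemma chom_injective (e : G.induce C ≃g cycleG n) : Function.Injective (chom e) :=
  cvx_injective e

/-- the arc of the induced cycle from position `x` to position `x+k`, as a walk in `G`. -/
def mapArc (e : G.induce C ≃g cycleG n) (hn : 3 ≤ n) (x : ZMod n) (k : ℕ) :
    G.Walk (cvx e x) (cvx e (x + k)) :=
  (arcWalk n hn x k).map (chom e)

lemma mem_mapArc_support (e : G.induce C ≃g cycleG n) (hn : 3 ≤ n) (x : ZMod n) (k : ℕ)
    (v : V) : v ∈ (mapArc e hn x k).support ↔ ∃ i : ℕ, i ≤ k ∧ v = cvx e (x + (i : ℕ)) := by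
  show v ∈ ((arcWalk n hn x k).map (chom e)).support ↔ _
  rw [Walk.support_map, List.mem_map]
  constructor
  · rintro ⟨z, hz, rfl⟩
    obtain ⟨i, hik, rfl⟩ := (mem_arcWalk_support n hn x k z).mp hz
    exact ⟨i, hik, rfl⟩
  · rintro ⟨i, hik, rfl⟩
    exact ⟨x + (i : ℕ), (mem_arcWalk_support n hn x k _).mpr ⟨i, hik, rfl⟩, rfl⟩

lemma mapArc_isPath (e : G.induce C ≃g cycleG n) (hn : 3 ≤ n) (x : ZMod n) (k : ℕ)
    (hk : k < n) : (mapArc e hn x k).IsPath :=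
  Walk.map_isPath_of_injective (chom_injective e) (arcWalk_isPath n hn x k hk)

lemma cvx_mem (e : G.induce C ≃g cycleG n) (z : ZMod n) : cvx e z ∈ C := (e.symm z).2

lemma cvx_pos [NeZero n] (e : G.induce C ≃g cycleG n) {v : V} (hv : v ∈ C) :
    cvx e (pos C e v) = v := by
  rw [pos_mem e hv]
  exact congrArg Subtype.val (e.symm_apply_apply _)

end transport
end St18

namespace St18
open SimpleGraph
variable {V : Type} {G : SimpleGraph V} {S : Set V}

lemma avoidReach_refl {x : V} (hx : x ∉ S) : AvoidReach G S x x :=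
  ⟨Walk.nil, by simpa using hx⟩

lemma avoidReach_symm {x y : V} (h : AvoidReach G S x y) : AvoidReach G S y x := by
  obtain ⟨p, hp⟩ := h
  exact ⟨p.reverse, fun v hv => hp v (by rwa [Walk.support_reverse, List.mem_reverse] at hv)⟩

lemma avoidReach_trans {x y z : V} (h1 : AvoidReach G S x y) (h2 : AvoidReach G S y z) :
    AvoidReach G S x z := by
  obtain ⟨p, hp⟩ := h1
  obtain ⟨q, hq⟩ := h2
  refine ⟨p.append q, fun v hv => ?_⟩
  rcases (Walk.mem_support_append_iff _ _).mp hv with h | h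
  · exact hp v h
  · exact hq v h

lemma avoidReach_adj {x y : V} (h : G.Adj x y) (hx : x ∉ S) (hy : y ∉ S) :
    AvoidReach G S x y := by
  refine ⟨Walk.cons h Walk.nil, fun v hv => ?_⟩
  simp only [Walk.support_cons, Walk.support_nil, List.mem_cons, List.mem_singleton] at hv
  rcases hv with rfl | rfl | h'
  · exact hx
  · exact hy
  · exact absurd h' List.not_mem_nil

lemma not_avoidReach_end (hy : y ∈ S) {x : V} : ¬ AvoidReach G S x y := by
  rintro ⟨p, hp⟩
  exact hp y p.end_mem_support hy

lemma reach_truncate {c s : V} :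
    ∀ {u a : V} (W : G.Walk u a), a ≠ c → (∀ x ∈ W.support, x ≠ c) →
    ¬ AvoidReach G {a, c} s u →
    ∃ W' : G.Walk u a, (∀ x ∈ W'.support, x ≠ c) ∧
      ∀ x ∈ W'.support, x ≠ a → ¬ AvoidReach G {a, c} s x := by
  intro u a W
  induction W with
  | nil =>
    intro hac _ _
    refine ⟨Walk.nil, ?_, ?_⟩
    · intro x hx; simp only [Walk.support_nil, List.mem_singleton] at hx; rw [hx]; exact hac
    · intro x hx hxa
      simp only [Walk.support_nil, List.mem_singleton] at hx
      exact absurd hx hxa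
  | @cons u v w hadj p ih =>
    intro hac h1 h2
    by_cases hua : u = w
    · subst hua
      refine ⟨Walk.nil, ?_, ?_⟩
      · intro x hx
        simp only [Walk.support_nil, List.mem_singleton] at hx
        rw [hx]; exact hac
      · intro x hx hxa
        simp only [Walk.support_nil, List.mem_singleton] at hx
        exact absurd hx hxa
    · have huc : u ≠ c := h1 u (by simp)
      have hsup : ∀ x ∈ p.support, x ≠ c := fun x hx => h1 x (by simp [hx])
      have hvc : v ≠ c := hsup v p.start_mem_support
      have hRv : ¬ AvoidReach G {w, c} s v := by
        intro hRv
        by_cases hva : v = w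
        · rw [hva] at hRv
          exact not_avoidReach_end (by simp) hRv
        · refine h2 (avoidReach_trans hRv (avoidReach_adj hadj.symm ?_ ?_))
          · simp [hva, hvc]
          · simp [hua, huc]
      obtain ⟨W', hW1, hW2⟩ := ih hac hsup hRv
      refine ⟨Walk.cons hadj W', ?_, ?_⟩
      · intro x hx
        simp only [Walk.support_cons, List.mem_cons] at hx
        rcases hx with rfl | hx
        · exact huc
        · exact hW1 x hx
      · intro x hx hxa
        simp only [Walk.support_cons, List.mem_cons] at hx
        rcases hx with rfl | hx
        · exact h2
        · exact hW2 x hx hxa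

lemma exists_branch [DecidableEq V] (hvtx : NoSepVertex G) {a c s w : V} (hac : a ≠ c)
    (hwa : w ≠ a) (hwc : w ≠ c) (hw : ¬ AvoidReach G {a, c} s w) :
    ∃ Q : G.Walk a c, Q.IsPath ∧
      ∀ x ∈ Q.support, x ≠ a → x ≠ c → ¬ AvoidReach G {a, c} s x := by
  obtain ⟨W₁, hW₁⟩ := hvtx c w a hwc hac
  obtain ⟨W₂, hW₂⟩ := hvtx a w c hwa hac.symm
  have hW₁' : ∀ x ∈ W₁.support, x ≠ c := fun x hx => by
    intro hxc; exact hW₁ x hx (by simp [hxc])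
  have hW₂' : ∀ x ∈ W₂.support, x ≠ a := fun x hx => by
    intro hxa; exact hW₂ x hx (by simp [hxa])
  obtain ⟨Wa, hWa1, hWa2⟩ := reach_truncate W₁ hac hW₁' hw
  have hpair : ({a, c} : Set V) = {c, a} := Set.pair_comm a c
  have hw' : ¬ AvoidReach G {c, a} s w := by rwa [← hpair]
  obtain ⟨Wc, hWc1, hWc2⟩ := reach_truncate W₂ hac.symm hW₂' hw'
  refine ⟨(Wa.reverse.append Wc).bypass, Walk.bypass_isPath _, ?_⟩
  intro x hx hxa hxc
  have hx' := (Walk.support_bypass_subset _) hx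
  rcases (Walk.mem_support_append_iff _ _).mp hx' with h | h
  · rw [Walk.support_reverse, List.mem_reverse] at h
    exact hWa2 x h hxa
  · have := hWc2 x h hxc
    rwa [← hpair] at this

end St18

namespace St18
set_option maxHeartbeats 1000000
open SimpleGraph
variable {V : Type}

private lemma mem4 {a u c v x : V} (h : x = a ∨ x = u ∨ x = c ∨ x = v) :
    x ∈ Set.range ![a, u, c, v] := by
  rcases h with rfl | rfl | rfl | rfl
  · exact ⟨0, rfl⟩
  · exact ⟨1, rfl⟩
  · exact ⟨2, rfl⟩
  · exact ⟨3, rfl⟩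

def pick {G : SimpleGraph V} {a u c v : V}
    (w01 : G.Walk a u) (w02 : G.Walk a c) (w03 : G.Walk a v)
    (w12 : G.Walk u c) (w13 : G.Walk u v) (w23 : G.Walk c v)
    (i j : Fin 4) (h : i < j) : G.Walk (![a,u,c,v] i) (![a,u,c,v] j) :=
  match i, j, h with
  | 0, 1, _ => w01
  | 0, 2, _ => w02
  | 0, 3, _ => w03
  | 1, 2, _ => w12
  | 1, 3, _ => w13
  | 2, 3, _ => w23
  | 0, 0, h => absurd h (by decide)
  | 1, 0, h => absurd h (by decide)
  | 1, 1, h => absurd h (by decide)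
  | 2, 0, h => absurd h (by decide)
  | 2, 1, h => absurd h (by decide)
  | 2, 2, h => absurd h (by decide)
  | 3, 0, h => absurd h (by decide)
  | 3, 1, h => absurd h (by decide)
  | 3, 2, h => absurd h (by decide)
  | 3, 3, h => absurd h (by decide)

lemma useK4 [Fintype V] {G : SimpleGraph V} {A : Set V} (hA2 : CondA2 G A)
    {a u c v s : V}
    (hau : a ≠ u) (hac : a ≠ c) (hav : a ≠ v) (huc : u ≠ c) (huv : u ≠ v) (hcv : c ≠ v)
    (w01 : G.Walk a u) (w02 : G.Walk a c) (w03 : G.Walk a v)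
    (w12 : G.Walk u c) (w13 : G.Walk u v) (w23 : G.Walk c v)
    (h01 : w01.IsPath) (h02 : w02.IsPath) (h03 : w03.IsPath)
    (h12 : w12.IsPath) (h13 : w13.IsPath) (h23 : w23.IsPath)
    (e01c : c ∉ w01.support) (e01v : v ∉ w01.support)
    (e02u : u ∉ w02.support) (e02v : v ∉ w02.support)
    (e03u : u ∉ w03.support) (e03c : c ∉ w03.support)
    (e12a : a ∉ w12.support) (e12v : v ∉ w12.support)
    (e13a : a ∉ w13.support) (e13c : c ∉ w13.support)
    (e23a : a ∉ w23.support) (e23u : u ∉ w23.support)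
    (d0102 : ∀ x, x ∈ w01.support → x ∈ w02.support → x = a ∨ x = u ∨ x = c ∨ x = v)
    (d0103 : ∀ x, x ∈ w01.support → x ∈ w03.support → x = a ∨ x = u ∨ x = c ∨ x = v)
    (d0112 : ∀ x, x ∈ w01.support → x ∈ w12.support → x = a ∨ x = u ∨ x = c ∨ x = v)
    (d0113 : ∀ x, x ∈ w01.support → x ∈ w13.support → x = a ∨ x = u ∨ x = c ∨ x = v)
    (d0123 : ∀ x, x ∈ w01.support → x ∈ w23.support → x = a ∨ x = u ∨ x = c ∨ x = v)
    (d0203 : ∀ x, x ∈ w02.support → x ∈ w03.support → x = a ∨ x = u ∨ x = c ∨ x = v)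
    (d0212 : ∀ x, x ∈ w02.support → x ∈ w12.support → x = a ∨ x = u ∨ x = c ∨ x = v)
    (d0213 : ∀ x, x ∈ w02.support → x ∈ w13.support → x = a ∨ x = u ∨ x = c ∨ x = v)
    (d0223 : ∀ x, x ∈ w02.support → x ∈ w23.support → x = a ∨ x = u ∨ x = c ∨ x = v)
    (d0312 : ∀ x, x ∈ w03.support → x ∈ w12.support → x = a ∨ x = u ∨ x = c ∨ x = v)
    (d0313 : ∀ x, x ∈ w03.support → x ∈ w13.support → x = a ∨ x = u ∨ x = c ∨ x = v)
    (d0323 : ∀ x, x ∈ w03.support → x ∈ w23.support → x = a ∨ x = u ∨ x = c ∨ x = v)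
    (d1213 : ∀ x, x ∈ w12.support → x ∈ w13.support → x = a ∨ x = u ∨ x = c ∨ x = v)
    (d1223 : ∀ x, x ∈ w12.support → x ∈ w23.support → x = a ∨ x = u ∨ x = c ∨ x = v)
    (d1323 : ∀ x, x ∈ w13.support → x ∈ w23.support → x = a ∨ x = u ∨ x = c ∨ x = v)
    (hsA : s ∈ A) (haA : a ∈ A) (hcA : c ∈ A)
    (hsa : s ≠ a) (hsc : s ≠ c)
    (hs_mem : s ∈ w01.support ∨ s ∈ w12.support)
    (hs02 : s ∉ w02.support) : False := by
  have hbinj : Function.Injective ![a, u, c, v] := by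
    intro i j hij
    fin_cases i <;> fin_cases j <;>
      first
        | rfl
        | exact absurd hij hau | exact absurd hij hac | exact absurd hij hav
        | exact absurd hij huc | exact absurd hij huv | exact absurd hij hcv
        | exact absurd hij.symm hau | exact absurd hij.symm hac | exact absurd hij.symm hav
        | exact absurd hij.symm huc | exact absurd hij.symm huv | exact absurd hij.symm hcv
  have hend : ∀ i j (h : i < j) (k : Fin 4),
      (![a,u,c,v] : Fin 4 → V) k ∈ (pick w01 w02 w03 w12 w13 w23 i j h).support →
      k = i ∨ k = j := by
    intro i j h k
    fin_cases i <;> fin_cases j <;> first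
      | exact absurd h (by decide)
      | (fin_cases k <;> first
          | (intro _; left; rfl)
          | (intro _; right; rfl)
          | (intro hm; exact absurd hm e01c) | (intro hm; exact absurd hm e01v)
          | (intro hm; exact absurd hm e02u) | (intro hm; exact absurd hm e02v)
          | (intro hm; exact absurd hm e03u) | (intro hm; exact absurd hm e03c)
          | (intro hm; exact absurd hm e12a) | (intro hm; exact absurd hm e12v)
          | (intro hm; exact absurd hm e13a) | (intro hm; exact absurd hm e13c)
          | (intro hm; exact absurd hm e23a) | (intro hm; exact absurd hm e23u))
  let K : SubdividedK4 G :=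
    { b := ![a, u, c, v]
      inj := hbinj
      path := pick w01 w02 w03 w12 w13 w23
      isPath := by
        intro i j h
        fin_cases i <;> fin_cases j <;> first
          | exact absurd h (by decide)
          | exact h01 | exact h02 | exact h03 | exact h12 | exact h13 | exact h23
      endpts := hend
      disjoint := by
        intro i j h i' j' h' hne x hx hx'
        fin_cases i <;> fin_cases j <;> (try exact absurd h (by decide)) <;>
          fin_cases i' <;> fin_cases j' <;> (try exact absurd h' (by decide)) <;>
          first
          | exact absurd rfl hne
          | exact mem4 (d0102 x hx hx') | exact mem4 (d0102 x hx' hx)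
          | exact mem4 (d0103 x hx hx') | exact mem4 (d0103 x hx' hx)
          | exact mem4 (d0112 x hx hx') | exact mem4 (d0112 x hx' hx)
          | exact mem4 (d0113 x hx hx') | exact mem4 (d0113 x hx' hx)
          | exact mem4 (d0123 x hx hx') | exact mem4 (d0123 x hx' hx)
          | exact mem4 (d0203 x hx hx') | exact mem4 (d0203 x hx' hx)
          | exact mem4 (d0212 x hx hx') | exact mem4 (d0212 x hx' hx)
          | exact mem4 (d0213 x hx hx') | exact mem4 (d0213 x hx' hx)
          | exact mem4 (d0223 x hx hx') | exact mem4 (d0223 x hx' hx)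
          | exact mem4 (d0312 x hx hx') | exact mem4 (d0312 x hx' hx)
          | exact mem4 (d0313 x hx hx') | exact mem4 (d0313 x hx' hx)
          | exact mem4 (d0323 x hx hx') | exact mem4 (d0323 x hx' hx)
          | exact mem4 (d1213 x hx hx') | exact mem4 (d1213 x hx' hx)
          | exact mem4 (d1223 x hx hx') | exact mem4 (d1223 x hx' hx)
          | exact mem4 (d1323 x hx hx') | exact mem4 (d1323 x hx' hx) }
  have haV : a ∈ K.verts := ⟨0, 1, by decide, w01.start_mem_support⟩
  have hcV : c ∈ K.verts := ⟨0, 2, by decide, w02.end_mem_support⟩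
  have hsV : s ∈ K.verts := by
    rcases hs_mem with hs | hs
    · exact ⟨0, 1, by decide, hs⟩
    · exact ⟨1, 2, by decide, hs⟩
  have hsub : ({a, c, s} : Set V) ⊆ A ∩ K.verts := by
    rintro x (rfl | rfl | rfl)
    · exact ⟨haA, haV⟩
    · exact ⟨hcA, hcV⟩
    · exact ⟨hsA, hsV⟩
  have hcard : 3 ≤ (A ∩ K.verts).ncard := by
    have h3 : ({a, c, s} : Set V).ncard = 3 :=
      Set.ncard_eq_three.mpr ⟨a, c, s, hac, hsa.symm, hsc.symm, rfl⟩
    rw [← h3]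
    exact Set.ncard_le_ncard hsub (Set.toFinite _)
  obtain ⟨i, j, h, hall⟩ := hA2 K hcard
  have hia := hend i j h 0 (hall a haA)
  have hic := hend i j h 2 (hall c hcA)
  rcases hia with hia | hia <;> rcases hic with hic | hic
  · exact absurd (hia.trans hic.symm) (by decide)
  · subst hia; subst hic
    exact hs02 (hall s hsA)
  · subst hia; subst hic
    exact absurd h (by decide)
  · exact absurd (hia.trans hic.symm) (by decide)

end St18

namespace St18
open SimpleGraph
variable {V : Type} {G : SimpleGraph V} {C : Set V} {n : ℕ}

/-- the arc of the induced cycle between offsets `d ≤ m` from basepoint `x₀`. -/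
def SW (e : G.induce C ≃g cycleG n) (hn : 3 ≤ n) (x₀ : ZMod n) (d m : ℕ) (hdm : d ≤ m) :
    G.Walk (cvx e (x₀ + (d : ℕ))) (cvx e (x₀ + (m : ℕ))) :=
  (mapArc e hn (x₀ + (d : ℕ)) (m - d)).copy rfl (by
    congr 1
    push_cast [Nat.cast_sub hdm]
    ring)

lemma SW_support (e : G.induce C ≃g cycleG n) (hn : 3 ≤ n) (x₀ : ZMod n) (d m : ℕ)
    (hdm : d ≤ m) (x : V) :
    x ∈ (SW e hn x₀ d m hdm).support ↔ ∃ l : ℕ, d ≤ l ∧ l ≤ m ∧ x = cvx e (x₀ + (l : ℕ)) := by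
  rw [SW, Walk.support_copy, mem_mapArc_support]
  constructor
  · rintro ⟨i, hi, rfl⟩
    refine ⟨d + i, by omega, by omega, ?_⟩
    congr 1
    push_cast
    ring
  · rintro ⟨l, h1, h2, rfl⟩
    refine ⟨l - d, by omega, ?_⟩
    congr 1
    push_cast [Nat.cast_sub h1]
    ring

lemma SW_isPath (e : G.induce C ≃g cycleG n) (hn : 3 ≤ n) (x₀ : ZMod n) (d m : ℕ)
    (hdm : d ≤ m) (hmn : m - d < n) : (SW e hn x₀ d m hdm).IsPath := by
  rw [SW, Walk.isPath_copy]
  exact mapArc_isPath e hn _ _ hmn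

lemma cvx_add_inj (e : G.induce C ≃g cycleG n) (hn : 3 ≤ n) (x₀ : ZMod n) {l₁ l₂ : ℕ}
    (h1 : l₁ ≤ n) (h2 : l₂ ≤ n)
    (h : cvx e (x₀ + (l₁ : ℕ)) = cvx e (x₀ + (l₂ : ℕ))) :
    l₁ = l₂ ∨ (l₁ = 0 ∧ l₂ = n) ∨ (l₁ = n ∧ l₂ = 0) := by
  have h' := cvx_injective e h
  have hc : ((l₁ : ℕ) : ZMod n) = ((l₂ : ℕ) : ZMod n) := by
    have := add_left_cancel h'
    exact this
  rcases eq_or_lt_of_le h1 with rfl | h1' <;> rcases eq_or_lt_of_le h2 with rfl | h2'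
  · exact Or.inl rfl
  · rw [ZMod.natCast_self] at hc
    have : (0 : ℕ) = l₂ := natCast_inj_of_lt (by omega) h2' (by rw [← hc]; simp)
    exact Or.inr (Or.inr ⟨rfl, this.symm⟩)
  · rw [ZMod.natCast_self] at hc
    have : (0 : ℕ) = l₁ := natCast_inj_of_lt (by omega) h1' (by rw [hc]; simp)
    exact Or.inr (Or.inl ⟨this.symm, rfl⟩)
  · exact Or.inl (natCast_inj_of_lt h1' h2' hc)

end St18

namespace St18
set_option maxHeartbeats 1600000
open SimpleGraph
variable {V : Type} {G : SimpleGraph V} {C : Set V} {n : ℕ} {A : Set V}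

lemma not_reach_of_crs_pattern [Fintype V] [NeZero n]
    (hvtx : NoSepVertex G) (hA1 : CondA1 G A) (hA2 : CondA2 G A) (hAC : A ⊆ C)
    (e : G.induce C ≃g cycleG n) (hn : 3 ≤ n)
    {a c s t : V} (haA : a ∈ A) (hcA : c ∈ A) (hsA : s ∈ A) (htA : t ∈ A)
    (hac : a ≠ c) (has : a ≠ s) (hat : a ≠ t) (hcs : c ≠ s) (hct : c ≠ t) (hst : s ≠ t)
    (hpq : dlt (pos C e) a s < dlt (pos C e) a c)
    (hqr : dlt (pos C e) a c < dlt (pos C e) a t) :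
    ¬ AvoidReach G {a, c} s t := by
  classical
  intro HR
  set x₀ : ZMod n := pos C e a with hx0
  set vx : ℕ → V := fun l => cvx e (x₀ + (l : ℕ)) with hvx
  set p := dlt (pos C e) a s with hp
  set q := dlt (pos C e) a c with hq
  set r := dlt (pos C e) a t with hr
  have hinj : A.InjOn (pos C e) := pos_injOn e hAC
  have hp0 : 0 < p := dlt_pos hinj haA hsA has
  have hrn : r < n := dlt_lt a t
  have hq2 : 2 ≤ q := by omega
  have hqn2 : q ≤ n - 2 := by omega
  -- identification of vertices with offsets
  have hkey : ∀ z : V, z ∈ C → vx (dlt (pos C e) a z) = z := by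
    intro z hz
    show cvx e (x₀ + ((dlt (pos C e) a z : ℕ) : ZMod n)) = z
    rw [natCast_dlt]
    have h1 : x₀ + (pos C e z - pos C e a) = pos C e z := by rw [hx0]; ring
    rw [h1]
    exact cvx_pos e hz
  have hva : vx 0 = a := by
    have h0 : dlt (pos C e) a a = 0 := by
      rw [dlt]; simp
    have := hkey a (hAC haA)
    rwa [h0] at this
  have hvs : vx p = s := hkey s (hAC hsA)
  have hvc : vx q = c := hkey c (hAC hcA)
  have hvt : vx r = t := hkey t (hAC htA)
  have hvn : vx n = a := by
    show cvx e (x₀ + ((n : ℕ) : ZMod n)) = a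
    rw [ZMod.natCast_self, add_zero, hx0]
    exact cvx_pos e (hAC haA)
  -- injectivity of vx on `[0, n]` modulo wrap
  have hvinj : ∀ l1 l2 : ℕ, l1 ≤ n → l2 ≤ n → vx l1 = vx l2 →
      l1 = l2 ∨ (l1 = 0 ∧ l2 = n) ∨ (l1 = n ∧ l2 = 0) := by
    intro l1 l2 h1 h2 hh
    exact cvx_add_inj e hn x₀ h1 h2 hh
  have hvne : ∀ l1 l2 : ℕ, l1 < n → l2 < n → l1 ≠ l2 → vx l1 ≠ vx l2 := by
    intro l1 l2 h1 h2 hne hh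
    rcases hvinj l1 l2 (by omega) (by omega) hh with h | ⟨h, h'⟩ | ⟨h, h'⟩ <;> omega
  -- arcs avoiding {a, c}
  have hseg : ∀ d m : ℕ, d ≤ m → 0 < d → m < n → (m < q ∨ q < d) →
      AvoidReach G {a, c} (vx d) (vx m) := by
    intro d m hdm hd0 hmn hdq
    refine ⟨SW e hn x₀ d m hdm, ?_⟩
    intro z hz
    obtain ⟨l, hl1, hl2, rfl⟩ := (SW_support e hn x₀ d m hdm z).mp hz
    intro hmem
    rcases hmem with hza | hzc
    · rw [show (cvx e (x₀ + (l : ℕ))) = vx l from rfl, ← hva] at hza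
      rcases hvinj l 0 (by omega) (by omega) hza with h | ⟨h, h'⟩ | ⟨h, h'⟩ <;> omega
    · simp only [Set.mem_singleton_iff] at hzc
      rw [show (cvx e (x₀ + (l : ℕ))) = vx l from rfl, ← hvc] at hzc
      rcases hvinj l q (by omega) (by omega) hzc with h | ⟨h, h'⟩ | ⟨h, h'⟩ <;> omega
  have hI1 : ∀ l : ℕ, 0 < l → l < q → AvoidReach G {a, c} s (vx l) := by
    intro l h1 h2
    rcases le_or_gt p l with h | h
    · have := hseg p l h hp0 (by omega) (Or.inl h2)
      rwa [hvs] at this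
    · have := hseg l p (by omega) h1 (by omega) (Or.inl (by omega))
      rw [hvs] at this
      exact avoidReach_symm this
  have hI2 : ∀ l : ℕ, q < l → l < n → AvoidReach G {a, c} t (vx l) := by
    intro l h1 h2
    rcases le_or_gt r l with h | h
    · have := hseg r l h (by omega) (by omega) (Or.inr (by omega))
      rwa [hvt] at this
    · have := hseg l r (by omega) (by omega) (by omega) (Or.inr h1)
      rw [hvt] at this
      exact avoidReach_symm this
  have hcls : ∀ l : ℕ, 0 < l → l < n → l ≠ q → AvoidReach G {a, c} s (vx l) := by
    intro l h1 h2 h3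
    rcases lt_or_gt_of_ne h3 with h | h
    · exact hI1 l h1 h
    · exact avoidReach_trans HR (hI2 l h h2)
  -- a and c are non-adjacent
  have hnadj : ¬ G.Adj a c := by
    intro had
    have h2 : (G.induce C).Adj ⟨a, hAC haA⟩ ⟨c, hAC hcA⟩ := had
    have h3 := e.map_rel_iff.mpr h2
    have hea : e ⟨a, hAC haA⟩ = x₀ := by rw [hx0, pos_mem e (hAC haA)]
    have hec : e ⟨c, hAC hcA⟩ = x₀ + (q : ℕ) := by
      rw [pos_mem e (hAC hcA) |>.symm, hq, natCast_dlt, hx0]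
      ring
    rw [hea, hec, cycleG_adj] at h3
    obtain ⟨-, h4 | h4⟩ := h3
    · have h5 : ((q + 1 : ℕ) : ZMod n) = 0 := by
        push_cast
        linear_combination -h4
      have h6 : n ∣ q + 1 := (ZMod.natCast_eq_zero_iff _ _).mp h5
      have := Nat.le_of_dvd (by omega) h6
      omega
    · have h5 : ((q : ℕ) : ZMod n) = ((1 : ℕ) : ZMod n) := by
        push_cast
        linear_combination h4
      have := natCast_inj_of_lt (show q < n by omega) (show 1 < n by omega) h5
      omega
  -- a separating pair gives a vertex outside the class of s
  obtain ⟨-, hsep⟩ := hA1 a haA c hcA hac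
  have hwex : ∃ w : V, w ≠ a ∧ w ≠ c ∧ ¬ AvoidReach G {a, c} s w := by
    rcases hsep with ⟨had, -⟩ | ⟨x, y, hx, hy, hxy⟩
    · exact absurd had hnadj
    · simp only [Set.mem_insert_iff, Set.mem_singleton_iff, not_or] at hx hy
      by_cases hcx : AvoidReach G {a, c} s x
      · refine ⟨y, hy.1, hy.2, fun hcy => ?_⟩
        exact hxy (avoidReach_trans (avoidReach_symm hcx) hcy)
      · exact ⟨x, hx.1, hx.2, hcx⟩
  obtain ⟨w, hwa, hwc, hw⟩ := hwex
  obtain ⟨Q, hQp, hQ⟩ := exists_branch hvtx hac hwa hwc hw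
  -- minimal connector between the two open arcs
  let Pk : ℕ → Prop := fun k => ∃ i j : ℕ, (0 < i ∧ i < q) ∧ (q < j ∧ j < n) ∧
      ∃ W : G.Walk (vx i) (vx j), (∀ z ∈ W.support, z ≠ a ∧ z ≠ c) ∧ W.length = k
  have hex : ∃ k, Pk k := by
    obtain ⟨W0, hW0⟩ := HR
    refine ⟨(W0.copy hvs.symm hvt.symm).length, p, r, ⟨hp0, hpq⟩, ⟨hqr, hrn⟩,
      W0.copy hvs.symm hvt.symm, ?_, rfl⟩
    intro z hz
    rw [Walk.support_copy] at hz
    have := hW0 z hz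
    simp only [Set.mem_insert_iff, Set.mem_singleton_iff, not_or] at this
    exact this
  obtain ⟨i₀, j₀, hi₀, hj₀, W1, hW1av, hW1len⟩ := Nat.find_spec hex
  have hmin : ∀ m, m < Nat.find hex → ¬ Pk m := fun m hm => Nat.find_min hex hm
  set Wb := W1.bypass with hWbdef
  have hWbP : Wb.IsPath := Walk.bypass_isPath W1
  have hWbav : ∀ z ∈ Wb.support, z ≠ a ∧ z ≠ c := by
    intro z hz
    exact hW1av z (Walk.support_bypass_subset W1 hz)
  have hWblen : Wb.length = Nat.find hex := by
    have h1 : Wb.length ≤ Nat.find hex := hW1len ▸ Walk.length_bypass_le W1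
    have h2 : Nat.find hex ≤ Wb.length :=
      Nat.find_min' hex ⟨i₀, j₀, hi₀, hj₀, Wb, hWbav, rfl⟩
    omega
  -- interior of Wb avoids the cycle
  have hint : ∀ x ∈ Wb.support, ∀ l : ℕ, l ≤ n → x = vx l → x = vx i₀ ∨ x = vx j₀ := by
    intro x hx l hln hxl
    have hxa := (hWbav x hx).1
    have hxc := (hWbav x hx).2
    have hl0 : l ≠ 0 := fun h => hxa (by rw [hxl, h, hva])
    have hlnn : l ≠ n := fun h => hxa (by rw [hxl, h, hvn])
    have hlq : l ≠ q := fun h => hxc (by rw [hxl, h, hvc])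
    have hlen2 := congrArg Walk.length (Walk.take_spec Wb hx)
    rw [Walk.length_append] at hlen2
    rcases lt_or_gt_of_ne hlq with hlltq | hlgtq
    · -- l on the first arc : the suffix from x is a competitor
      by_cases hT : (Wb.takeUntil x hx).length = 0
      · exact Or.inl (Walk.eq_of_length_eq_zero hT).symm
      · exfalso
        have hPk : Pk (Wb.dropUntil x hx).length := by
          refine ⟨l, j₀, ⟨by omega, hlltq⟩, hj₀, (Wb.dropUntil x hx).copy hxl rfl, ?_, Walk.length_copy _ _ _⟩
          intro z hz
          rw [Walk.support_copy] at hz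
          exact hWbav z (Walk.support_dropUntil_subset Wb hx hz)
        have := Nat.find_min' hex hPk
        omega
      -- l on the second arc : the prefix is a competitor
    · by_cases hD : (Wb.dropUntil x hx).length = 0
      · exact Or.inr (Walk.eq_of_length_eq_zero hD)
      · exfalso
        have hPk : Pk (Wb.takeUntil x hx).length := by
          refine ⟨i₀, l, hi₀, ⟨hlgtq, by omega⟩, (Wb.takeUntil x hx).copy rfl hxl, ?_, Walk.length_copy _ _ _⟩
          intro z hz
          rw [Walk.support_copy] at hz
          exact hWbav z (Walk.support_takeUntil_subset Wb hx hz)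
        have := Nat.find_min' hex hPk
        omega
  -- every vertex of Wb lies in the class of s
  have hWbcls : ∀ x ∈ Wb.support, AvoidReach G {a, c} s x := by
    intro x hx
    refine avoidReach_trans (hI1 i₀ hi₀.1 hi₀.2) ⟨Wb.takeUntil x hx, ?_⟩
    intro z hz
    have := hWbav z (Walk.support_takeUntil_subset Wb hx hz)
    simp only [Set.mem_insert_iff, Set.mem_singleton_iff, not_or]
    exact this
  -- abbreviations for the four branch vertices
  have hvneva : ∀ l : ℕ, 0 < l → l < n → vx l ≠ a := by
    intro l h1 h2
    rw [← hva]
    exact hvne l 0 h2 (by omega) (by omega)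
  have hvnevc : ∀ l : ℕ, l < n → l ≠ q → vx l ≠ c := by
    intro l h1 h2
    rw [← hvc]
    exact hvne l q h1 (by omega) h2
  -- the six walks
  have hQav : ∀ x ∈ Q.support, x ≠ a → x ≠ c → ¬ AvoidReach G {a, c} s x := hQ
  -- s itself is in its own class
  have hscls : AvoidReach G {a, c} s s := by
    refine avoidReach_refl ?_
    simp only [Set.mem_insert_iff, Set.mem_singleton_iff, not_or]
    exact ⟨Ne.symm has, Ne.symm hcs⟩
  have hgetSW : ∀ (d m : ℕ) (hdm : d ≤ m) (x : V), x ∈ (SW e hn x₀ d m hdm).support →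
      ∃ l, d ≤ l ∧ l ≤ m ∧ x = vx l := by
    intro d m hdm x hx
    obtain ⟨l, h1, h2, h3⟩ := (SW_support e hn x₀ d m hdm x).mp hx
    exact ⟨l, h1, h2, h3⟩
  have hput : ∀ (d m : ℕ) (hdm : d ≤ m) (l : ℕ), d ≤ l → l ≤ m →
      vx l ∈ (SW e hn x₀ d m hdm).support := by
    intro d m hdm l h1 h2
    exact (SW_support e hn x₀ d m hdm _).mpr ⟨l, h1, h2, rfl⟩
  have hQarc : ∀ x, x ∈ Q.support → ∀ l, l ≤ n → x = vx l →
      x = a ∨ x = vx i₀ ∨ x = c ∨ x = vx j₀ := by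
    intro x hxQ l hln hleq
    by_cases hl0 : l = 0
    · exact Or.inl (by rw [hleq, hl0]; exact hva)
    by_cases hlnn : l = n
    · exact Or.inl (by rw [hleq, hlnn]; exact hvn)
    by_cases hlq : l = q
    · exact Or.inr (Or.inr (Or.inl (by rw [hleq, hlq]; exact hvc)))
    · exfalso
      refine hQ x hxQ ?_ ?_ ?_
      · rw [hleq]; exact hvneva l (by omega) (by omega)
      · rw [hleq]; exact hvnevc l (by omega) hlq
      · rw [hleq]; exact hcls l (by omega) (by omega) hlq
  have hWbarc : ∀ x, x ∈ Wb.support → ∀ l, l ≤ n → x = vx l →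
      x = a ∨ x = vx i₀ ∨ x = c ∨ x = vx j₀ := by
    intro x hxW l hln hleq
    rcases hint x hxW l hln hleq with h | h
    · exact Or.inr (Or.inl h)
    · exact Or.inr (Or.inr (Or.inr h))
  -- now feed useK4
  refine useK4 hA2 (a := a) (u := vx i₀) (c := c) (v := vx j₀) (s := s)
    (Ne.symm (hvneva i₀ hi₀.1 (by omega))) hac (Ne.symm (hvneva j₀ (by omega) hj₀.2))
    (hvnevc i₀ (by omega) (by omega)) (hvne i₀ j₀ (by omega) hj₀.2 (by omega))
    (Ne.symm (hvnevc j₀ hj₀.2 (by omega)))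
    ((SW e hn x₀ 0 i₀ (by omega)).copy hva rfl)
    Q
    (((SW e hn x₀ j₀ n (by omega)).copy rfl hvn).reverse)
    ((SW e hn x₀ i₀ q (by omega)).copy rfl hvc)
    Wb
    ((SW e hn x₀ q j₀ (by omega)).copy hvc rfl)
    ?_ hQp ?_ ?_ hWbP ?_
    ?_ ?_ ?_ ?_ ?_ ?_ ?_ ?_ ?_ ?_ ?_ ?_
    ?_ ?_ ?_ ?_ ?_ ?_ ?_ ?_ ?_ ?_ ?_ ?_ ?_ ?_ ?_
    hsA haA hcA (Ne.symm has) (Ne.symm hcs) ?_ ?_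
  -- 1 h01
  · rw [Walk.isPath_copy]
    exact SW_isPath e hn x₀ 0 i₀ (by omega) (by omega)
  -- 2 h03
  · apply Walk.IsPath.reverse
    rw [Walk.isPath_copy]
    exact SW_isPath e hn x₀ j₀ n (by omega) (by omega)
  -- 3 h12
  · rw [Walk.isPath_copy]
    exact SW_isPath e hn x₀ i₀ q (by omega) (by omega)
  -- 4 h23
  · rw [Walk.isPath_copy]
    exact SW_isPath e hn x₀ q j₀ (by omega) (by omega)
  -- 5 e01c
  · intro hx
    rw [Walk.support_copy] at hx
    obtain ⟨l, h1, h2, h3⟩ := hgetSW 0 i₀ (by omega) c hx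
    exact hvnevc l (by omega) (by omega) h3.symm
  -- 6 e01v
  · intro hx
    rw [Walk.support_copy] at hx
    obtain ⟨l, h1, h2, h3⟩ := hgetSW 0 i₀ (by omega) _ hx
    exact hvne j₀ l hj₀.2 (by omega) (by omega) h3
  -- 7 e02u
  · intro hx
    exact hQ _ hx (hvneva i₀ hi₀.1 (by omega)) (hvnevc i₀ (by omega) (by omega))
      (hI1 i₀ hi₀.1 hi₀.2)
  -- 8 e02v
  · intro hx
    exact hQ _ hx (hvneva j₀ (by omega) hj₀.2) (hvnevc j₀ hj₀.2 (by omega))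
      (avoidReach_trans HR (hI2 j₀ hj₀.1 hj₀.2))
  -- 9 e03u
  · intro hx
    rw [Walk.support_reverse, List.mem_reverse, Walk.support_copy] at hx
    obtain ⟨l, h1, h2, h3⟩ := hgetSW j₀ n (by omega) _ hx
    rcases hvinj i₀ l (by omega) (by omega) h3 with h | ⟨h4, h5⟩ | ⟨h4, h5⟩ <;> omega
  -- 10 e03c
  · intro hx
    rw [Walk.support_reverse, List.mem_reverse, Walk.support_copy] at hx
    obtain ⟨l, h1, h2, h3⟩ := hgetSW j₀ n (by omega) c hx
    rw [← hvc] at h3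
    rcases hvinj q l (by omega) (by omega) h3 with h | ⟨h4, h5⟩ | ⟨h4, h5⟩ <;> omega
  -- 11 e12a
  · intro hx
    rw [Walk.support_copy] at hx
    obtain ⟨l, h1, h2, h3⟩ := hgetSW i₀ q (by omega) a hx
    rw [← hva] at h3
    rcases hvinj 0 l (by omega) (by omega) h3 with h | ⟨h4, h5⟩ | ⟨h4, h5⟩ <;> omega
  -- 12 e12v
  · intro hx
    rw [Walk.support_copy] at hx
    obtain ⟨l, h1, h2, h3⟩ := hgetSW i₀ q (by omega) _ hx
    rcases hvinj j₀ l (by omega) (by omega) h3 with h | ⟨h4, h5⟩ | ⟨h4, h5⟩ <;> omega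
  -- 13 e13a
  · intro hx
    exact (hWbav a hx).1 rfl
  -- 14 e13c
  · intro hx
    exact (hWbav c hx).2 rfl
  -- 15 e23a
  · intro hx
    rw [Walk.support_copy] at hx
    obtain ⟨l, h1, h2, h3⟩ := hgetSW q j₀ (by omega) a hx
    rw [← hva] at h3
    rcases hvinj 0 l (by omega) (by omega) h3 with h | ⟨h4, h5⟩ | ⟨h4, h5⟩ <;> omega
  -- 16 e23u
  · intro hx
    rw [Walk.support_copy] at hx
    obtain ⟨l, h1, h2, h3⟩ := hgetSW q j₀ (by omega) _ hx
    rcases hvinj i₀ l (by omega) (by omega) h3 with h | ⟨h4, h5⟩ | ⟨h4, h5⟩ <;> omega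
  -- 17 d0102 (w01, Q)
  · intro x hx hx'
    rw [Walk.support_copy] at hx
    obtain ⟨l, h1, h2, h3⟩ := hgetSW 0 i₀ (by omega) x hx
    exact hQarc x hx' l (by omega) h3
  -- 18 d0103 (w01, w03)
  · intro x hx hx'
    rw [Walk.support_copy] at hx
    rw [Walk.support_reverse, List.mem_reverse, Walk.support_copy] at hx'
    obtain ⟨l, h1, h2, h3⟩ := hgetSW 0 i₀ (by omega) x hx
    obtain ⟨l', h1', h2', h3'⟩ := hgetSW j₀ n (by omega) x hx'
    have heq : vx l = vx l' := h3.symm.trans h3'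
    rcases hvinj l l' (by omega) (by omega) heq with h | ⟨h4, h5⟩ | ⟨h4, h5⟩
    · omega
    · exact Or.inl (by rw [h3, h4]; exact hva)
    · omega
  -- 19 d0112 (w01, w12)
  · intro x hx hx'
    rw [Walk.support_copy] at hx hx'
    obtain ⟨l, h1, h2, h3⟩ := hgetSW 0 i₀ (by omega) x hx
    obtain ⟨l', h1', h2', h3'⟩ := hgetSW i₀ q (by omega) x hx'
    have heq : vx l = vx l' := h3.symm.trans h3'
    rcases hvinj l l' (by omega) (by omega) heq with h | ⟨h4, h5⟩ | ⟨h4, h5⟩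
    · refine Or.inr (Or.inl ?_)
      rw [h3]
      congr 1
      omega
    · omega
    · omega
  -- 20 d0113 (w01, Wb)
  · intro x hx hx'
    rw [Walk.support_copy] at hx
    obtain ⟨l, h1, h2, h3⟩ := hgetSW 0 i₀ (by omega) x hx
    exact hWbarc x hx' l (by omega) h3
  -- 21 d0123 (w01, w23)
  · intro x hx hx'
    rw [Walk.support_copy] at hx hx'
    obtain ⟨l, h1, h2, h3⟩ := hgetSW 0 i₀ (by omega) x hx
    obtain ⟨l', h1', h2', h3'⟩ := hgetSW q j₀ (by omega) x hx'
    have heq : vx l = vx l' := h3.symm.trans h3'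
    exfalso
    rcases hvinj l l' (by omega) (by omega) heq with h | ⟨h4, h5⟩ | ⟨h4, h5⟩ <;> omega
  -- 22 d0203 (Q, w03)
  · intro x hx hx'
    rw [Walk.support_reverse, List.mem_reverse, Walk.support_copy] at hx'
    obtain ⟨l, h1, h2, h3⟩ := hgetSW j₀ n (by omega) x hx'
    exact hQarc x hx l (by omega) h3
  -- 23 d0212 (Q, w12)
  · intro x hx hx'
    rw [Walk.support_copy] at hx'
    obtain ⟨l, h1, h2, h3⟩ := hgetSW i₀ q (by omega) x hx'
    exact hQarc x hx l (by omega) h3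
  -- 24 d0213 (Q, Wb)
  · intro x hx hx'
    exfalso
    exact hQ x hx (hWbav x hx').1 (hWbav x hx').2 (hWbcls x hx')
  -- 25 d0223 (Q, w23)
  · intro x hx hx'
    rw [Walk.support_copy] at hx'
    obtain ⟨l, h1, h2, h3⟩ := hgetSW q j₀ (by omega) x hx'
    exact hQarc x hx l (by omega) h3
  -- 26 d0312 (w03, w12)
  · intro x hx hx'
    rw [Walk.support_reverse, List.mem_reverse, Walk.support_copy] at hx
    rw [Walk.support_copy] at hx'
    obtain ⟨l, h1, h2, h3⟩ := hgetSW j₀ n (by omega) x hx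
    obtain ⟨l', h1', h2', h3'⟩ := hgetSW i₀ q (by omega) x hx'
    have heq : vx l = vx l' := h3.symm.trans h3'
    exfalso
    rcases hvinj l l' (by omega) (by omega) heq with h | ⟨h4, h5⟩ | ⟨h4, h5⟩ <;> omega
  -- 27 d0313 (w03, Wb)
  · intro x hx hx'
    rw [Walk.support_reverse, List.mem_reverse, Walk.support_copy] at hx
    obtain ⟨l, h1, h2, h3⟩ := hgetSW j₀ n (by omega) x hx
    exact hWbarc x hx' l (by omega) h3
  -- 28 d0323 (w03, w23)
  · intro x hx hx'
    rw [Walk.support_reverse, List.mem_reverse, Walk.support_copy] at hx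
    rw [Walk.support_copy] at hx'
    obtain ⟨l, h1, h2, h3⟩ := hgetSW j₀ n (by omega) x hx
    obtain ⟨l', h1', h2', h3'⟩ := hgetSW q j₀ (by omega) x hx'
    have heq : vx l = vx l' := h3.symm.trans h3'
    rcases hvinj l l' (by omega) (by omega) heq with h | ⟨h4, h5⟩ | ⟨h4, h5⟩
    · refine Or.inr (Or.inr (Or.inr ?_))
      rw [h3]
      congr 1
      omega
    · omega
    · omega
  -- 29 d1213 (w12, Wb)
  · intro x hx hx'
    rw [Walk.support_copy] at hx
    obtain ⟨l, h1, h2, h3⟩ := hgetSW i₀ q (by omega) x hx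
    exact hWbarc x hx' l (by omega) h3
  -- 30 d1223 (w12, w23)
  · intro x hx hx'
    rw [Walk.support_copy] at hx hx'
    obtain ⟨l, h1, h2, h3⟩ := hgetSW i₀ q (by omega) x hx
    obtain ⟨l', h1', h2', h3'⟩ := hgetSW q j₀ (by omega) x hx'
    have heq : vx l = vx l' := h3.symm.trans h3'
    rcases hvinj l l' (by omega) (by omega) heq with h | ⟨h4, h5⟩ | ⟨h4, h5⟩
    · refine Or.inr (Or.inr (Or.inl ?_))
      rw [h3, show l = q by omega]
      exact hvc
    · omega
    · omega
  -- 31 d1323 (Wb, w23)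
  · intro x hx hx'
    rw [Walk.support_copy] at hx'
    obtain ⟨l, h1, h2, h3⟩ := hgetSW q j₀ (by omega) x hx'
    exact hWbarc x hx l (by omega) h3
  -- 32 hs_mem
  · rcases le_or_gt p i₀ with h | h
    · left
      rw [Walk.support_copy]
      have := hput 0 i₀ (by omega) p (by omega) h
      rwa [hvs] at this
    · right
      rw [Walk.support_copy]
      have := hput i₀ q (by omega) p (by omega) (by omega)
      rwa [hvs] at this
  -- 33 hs02
  · intro hx
    exact hQ s hx (Ne.symm has) (Ne.symm hcs) hscls

end St18

namespace St18
open SimpleGraph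
variable {V : Type} {G : SimpleGraph V} {C : Set V} {n : ℕ} {A : Set V}

lemma reach_of_not_crs [NeZero n] (hAC : A ⊆ C) (e : G.induce C ≃g cycleG n) (hn : 3 ≤ n)
    {a c s t : V} (haA : a ∈ A) (hcA : c ∈ A) (hsA : s ∈ A) (htA : t ∈ A)
    (hac : a ≠ c) (has : a ≠ s) (hat : a ≠ t) (hcs : c ≠ s) (hct : c ≠ t) (hst : s ≠ t)
    (hnc : ¬ Crs (pos C e) a c s t) : AvoidReach G {a, c} s t := by
  set x₀ : ZMod n := pos C e a with hx0
  set vx : ℕ → V := fun l => cvx e (x₀ + (l : ℕ)) with hvx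
  set p := dlt (pos C e) a s with hp
  set q := dlt (pos C e) a c with hq
  set r := dlt (pos C e) a t with hr
  have hinj : A.InjOn (pos C e) := pos_injOn e hAC
  have hp0 : 0 < p := dlt_pos hinj haA hsA has
  have hq0 : 0 < q := dlt_pos hinj haA hcA hac
  have hr0 : 0 < r := dlt_pos hinj haA htA hat
  have hpn : p < n := dlt_lt a s
  have hqn : q < n := dlt_lt a c
  have hrn : r < n := dlt_lt a t
  have hpq : p ≠ q := fun h => hcs (hinj hcA hsA (dlt_inj h.symm))
  have hqr : q ≠ r := fun h => hct (hinj hcA htA (dlt_inj h))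
  have hpr : p ≠ r := fun h => hst (hinj hsA htA (dlt_inj h))
  have hkey : ∀ z : V, z ∈ C → vx (dlt (pos C e) a z) = z := by
    intro z hz
    show cvx e (x₀ + ((dlt (pos C e) a z : ℕ) : ZMod n)) = z
    rw [natCast_dlt]
    have h1 : x₀ + (pos C e z - pos C e a) = pos C e z := by rw [hx0]; ring
    rw [h1]
    exact cvx_pos e hz
  have hva : vx 0 = a := by
    have h0 : dlt (pos C e) a a = 0 := by rw [dlt]; simp
    have := hkey a (hAC haA)
    rwa [h0] at this
  have hvs : vx p = s := hkey s (hAC hsA)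
  have hvc : vx q = c := hkey c (hAC hcA)
  have hvt : vx r = t := hkey t (hAC htA)
  have hvinj : ∀ l1 l2 : ℕ, l1 ≤ n → l2 ≤ n → vx l1 = vx l2 →
      l1 = l2 ∨ (l1 = 0 ∧ l2 = n) ∨ (l1 = n ∧ l2 = 0) := by
    intro l1 l2 h1 h2 hh
    exact cvx_add_inj e hn x₀ h1 h2 hh
  have hseg : ∀ d m : ℕ, d ≤ m → 0 < d → m < n → (m < q ∨ q < d) →
      AvoidReach G {a, c} (vx d) (vx m) := by
    intro d m hdm hd0 hmn hdq
    refine ⟨SW e hn x₀ d m hdm, ?_⟩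
    intro z hz
    obtain ⟨l, hl1, hl2, rfl⟩ := (SW_support e hn x₀ d m hdm z).mp hz
    intro hmem
    rcases hmem with hza | hzc
    · rw [show (cvx e (x₀ + (l : ℕ))) = vx l from rfl, ← hva] at hza
      rcases hvinj l 0 (by omega) (by omega) hza with h | ⟨h, h'⟩ | ⟨h, h'⟩ <;> omega
    · simp only [Set.mem_singleton_iff] at hzc
      rw [show (cvx e (x₀ + (l : ℕ))) = vx l from rfl, ← hvc] at hzc
      rcases hvinj l q (by omega) (by omega) hzc with h | ⟨h, h'⟩ | ⟨h, h'⟩ <;> omega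
  have hcases : (p < q ∧ r < q) ∨ (q < p ∧ q < r) := by
    unfold Crs at hnc
    push_neg at hnc
    rw [← hp, ← hq, ← hr] at hnc
    omega
  rcases hcases with ⟨h1, h2⟩ | ⟨h1, h2⟩
  · rcases le_or_gt p r with h | h
    · have := hseg p r h hp0 hrn (Or.inl h2)
      rwa [hvs, hvt] at this
    · have := hseg r p (by omega) hr0 hpn (Or.inl h1)
      rw [hvs, hvt] at this
      exact avoidReach_symm this
  · rcases le_or_gt p r with h | h
    · have := hseg p r h hp0 hrn (Or.inr h1)
      rwa [hvs, hvt] at this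
    · have := hseg r p (by omega) hr0 hpn (Or.inr h2)
      rw [hvs, hvt] at this
      exact avoidReach_symm this

lemma crs_iff_sep [Fintype V] [NeZero n]
    (hvtx : NoSepVertex G) (hA1 : CondA1 G A) (hA2 : CondA2 G A) (hAC : A ⊆ C)
    (e : G.induce C ≃g cycleG n) (hn : 3 ≤ n)
    {a c s t : V} (haA : a ∈ A) (hcA : c ∈ A) (hsA : s ∈ A) (htA : t ∈ A)
    (hac : a ≠ c) (has : a ≠ s) (hat : a ≠ t) (hcs : c ≠ s) (hct : c ≠ t) (hst : s ≠ t) :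
    Crs (pos C e) a c s t ↔ ¬ AvoidReach G {a, c} s t := by
  constructor
  · rintro (⟨h1, h2⟩ | ⟨h1, h2⟩)
    · exact not_reach_of_crs_pattern hvtx hA1 hA2 hAC e hn haA hcA hsA htA hac has hat hcs
        hct hst h1 h2
    · intro hR
      exact not_reach_of_crs_pattern hvtx hA1 hA2 hAC e hn haA hcA htA hsA hac hat has hct
        hcs (Ne.symm hst) h1 h2 (avoidReach_symm hR)
  · intro hR
    by_contra hnc
    exact hR (reach_of_not_crs hAC e hn haA hcA hsA htA hac has hat hcs hct hst hnc)

end St18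

open St18 in
/-- For `A` satisfying (A1) and (A2) with `⟨A⟩` infinite, any two
induced cycles containing `A` induce (up to orientation) the same cyclic order on `A`. -/
theorem cyclic_order_well_defined (G : SimpleGraph V) [Fintype V]
    (hconn : G.Connected) (htf : G.CliqueFree 3)
    (hvtx : NoSepVertex G) (hedge : NoSepEdge G)
    (A : Set V) (hAinf : InfiniteSpecial G A)
    (hA1 : CondA1 G A) (hA2 : CondA2 G A)
    (C D : Set V) (n m : ℕ) (hn : 3 ≤ n) (hm : 3 ≤ m)
    (hAC : A ⊆ C) (hAD : A ⊆ D)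
    (e : G.induce C ≃g cycleG n) (f : G.induce D ≃g cycleG m) :
    (∀ a (ha : a ∈ A) b (hb : b ∈ A),
      NextIn e A a b (hAC ha) (hAC hb) ↔ NextIn f A a b (hAD ha) (hAD hb)) ∨
    (∀ a (ha : a ∈ A) b (hb : b ∈ A),
      NextIn e A a b (hAC ha) (hAC hb) ↔ NextIn f A b a (hAD hb) (hAD ha)) := by
  classical
  haveI : NeZero n := ⟨by omega⟩
  haveI : NeZero m := ⟨by omega⟩
  obtain ⟨a₀, ha₀, b₀, hb₀, hab₀, -⟩ := hAinf
  have h2 : ∃ a ∈ A, ∃ b ∈ A, a ≠ b := ⟨a₀, ha₀, b₀, hb₀, hab₀⟩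
  have hinjg : A.InjOn (pos C e) := pos_injOn e hAC
  have hinjh : A.InjOn (pos D f) := pos_injOn f hAD
  have hcr : SameCrs A (pos C e) (pos D f) := by
    intro a c s t ha hc hs ht h1 h3 h4 h5 h6 h7
    rw [crs_iff_sep hvtx hA1 hA2 hAC e hn ha hc hs ht h1 h3 h4 h5 h6 h7,
      crs_iff_sep hvtx hA1 hA2 hAD f hm ha hc hs ht h1 h3 h4 h5 h6 h7]
  rcases ct hinjg hinjh hcr h2 with H | H
  · left
    intro a ha b hb
    exact (nextIn_iff_nxt hn hAC h2 e ha hb).trans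
      ((H a b).trans (nextIn_iff_nxt hm hAD h2 f ha hb).symm)
  · right
    intro a ha b hb
    exact (nextIn_iff_nxt hn hAC h2 e ha hb).trans
      ((H a b).trans (nextIn_iff_nxt hm hAD h2 f hb ha).symm)
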